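/- Let A be a Z-graded ring having non-degenerate products in degree n, such that A^{≥0} admits a regular sequence (r, r̃) of central homogeneous elements of positive degree. Then n < 0, and A^{≤n} ⊆ A^{<0} are two-sided ideals of A annihilating each other: A^{≤n} · A^{<0} = 0 = A^{<0} · A^{≤n}. -/

import Mathlib

/-- `A` has non-degenerate products in degree `n`. -/
def NondegProducts {A : Type} [Ring A] (𝒜 : ℤ → AddSubgroup A) (n : ℤ) : Prop :=
  ∀ i : ℤ, ∀ a ∈ 𝒜 i, a ≠ 0 →
    (∃ b ∈ 𝒜 (n - i), a * b ≠ 0) ∧ ∃ c ∈ 𝒜 (n - i), c * a ≠ 0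

/-- The subgroup of `A` of elements supported in degrees belonging to `S`. -/
def gradedPart {A : Type} [Ring A] (𝒜 : ℤ → AddSubgroup A) (S : Set ℤ) : AddSubgroup A :=
  ⨆ i ∈ S, 𝒜 i

/-! The heart of the argument is that a homogeneous element `v` of negative degree `m` with
`0 ≤ d + m` satisfies `r * v = 0`. Multiplying by `rt ^ |m|` lifts `v` into `A^{≥0}`, so
`rt ^ |m| * (r * v) ∈ r A^{≥0}`; regularity of `rt` modulo `r` then gives `r * v = r * c` with
`c ∈ A^{≥0}`, and comparing components of degree `d + m` gives `r * v = r * c_m = 0`.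
Iterating, every homogeneous element `b` of negative degree is killed by a power of `r`, so by
regularity of `r` on `A^{≥0}` any product `b * x`, `x * b` of nonnegative degree vanishes.
The remaining claims follow from non-degeneracy: a homogeneous element vanishes once all its
products with elements of the complementary degree vanish, and each such product factors through
a product of a negative-degree element landing in nonnegative degree. -/

variable {A : Type} [Ring A] {𝒜 : ℤ → AddSubgroup A}

section GradedPart

@[elab_as_elim]
theorem gradedPart_induction {S : Set ℤ} {C : A → Prop} {x : A} (hx : x ∈ gradedPart 𝒜 S)
    (mem : ∀ i ∈ S, ∀ a ∈ 𝒜 i, C a) (zero : C 0) (add : ∀ a b, C a → C b → C (a + b)) :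
    C x := by
  refine AddSubgroup.iSup_induction (C := C) (fun i => ⨆ _ : i ∈ S, 𝒜 i) hx
    (fun i a ha => ?_) zero add
  by_cases hi : i ∈ S
  · rw [iSup_pos hi] at ha
    exact mem i hi a ha
  · rw [iSup_neg hi, AddSubgroup.mem_bot] at ha
    exact ha ▸ zero

theorem mem_gradedPart_of_mem {S : Set ℤ} {i : ℤ} {a : A} (ha : a ∈ 𝒜 i) (hi : i ∈ S) :
    a ∈ gradedPart 𝒜 S :=
  le_iSup₂ (f := fun i (_ : i ∈ S) => 𝒜 i) i hi ha

theorem gradedPart_mono {S T : Set ℤ} (h : S ⊆ T) : gradedPart 𝒜 S ≤ gradedPart 𝒜 T :=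
  biSup_mono h

theorem mem_gradedPart_univ [DirectSum.Decomposition 𝒜] (x : A) :
    x ∈ gradedPart 𝒜 Set.univ := by
  classical
  rw [← DirectSum.sum_support_decompose 𝒜 x]
  exact sum_mem fun i _ => mem_gradedPart_of_mem (SetLike.coe_mem _) (Set.mem_univ i)

theorem decompose_eq_zero_of_mem_gradedPart [DirectSum.Decomposition 𝒜] {S : Set ℤ} {a : A}
    (ha : a ∈ gradedPart 𝒜 S) {m : ℤ} (hm : m ∉ S) : (DirectSum.decompose 𝒜 a m : A) = 0 := by
  refine gradedPart_induction ha (fun i hi b hb => ?_) (by simp) fun a b ha hb => by simp [ha, hb]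
  exact DirectSum.decompose_of_mem_ne 𝒜 hb fun h => hm (h ▸ hi)

theorem mul_mem_of_mem_gradedPart {S T : Set ℤ} {U : AddSubgroup A}
    (h : ∀ i ∈ S, ∀ j ∈ T, ∀ a ∈ 𝒜 i, ∀ b ∈ 𝒜 j, a * b ∈ U)
    {a b : A} (ha : a ∈ gradedPart 𝒜 S) (hb : b ∈ gradedPart 𝒜 T) : a * b ∈ U := by
  refine gradedPart_induction ha (fun i hi a ha => ?_) (by simp) fun a c ha hc => by
    simpa [add_mul] using U.add_mem ha hc
  exact gradedPart_induction hb (fun j hj b hb => h i hi j hj a ha b hb) (by simp)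
    fun b c hb hc => by simpa [mul_add] using U.add_mem hb hc

theorem mul_eq_zero_of_mem_gradedPart {S T : Set ℤ}
    (h : ∀ i ∈ S, ∀ j ∈ T, ∀ a ∈ 𝒜 i, ∀ b ∈ 𝒜 j, a * b = 0)
    {a b : A} (ha : a ∈ gradedPart 𝒜 S) (hb : b ∈ gradedPart 𝒜 T) : a * b = 0 :=
  AddSubgroup.mem_bot.mp <| mul_mem_of_mem_gradedPart
    (fun i hi j hj a ha b hb => AddSubgroup.mem_bot.mpr (h i hi j hj a ha b hb)) ha hb

theorem gradedPart_isTwoSided_of_homogeneous [DirectSum.Decomposition 𝒜] {S : Set ℤ}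
    (h : ∀ i j, j ∈ S → ∀ x ∈ 𝒜 i, ∀ a ∈ 𝒜 j,
      x * a ∈ gradedPart 𝒜 S ∧ a * x ∈ gradedPart 𝒜 S) :
    ∀ x : A, ∀ a ∈ gradedPart 𝒜 S, x * a ∈ gradedPart 𝒜 S ∧ a * x ∈ gradedPart 𝒜 S :=
  fun x _ ha =>
    ⟨mul_mem_of_mem_gradedPart (fun i _ j hj x hx a ha => (h i j hj x hx a ha).1)
      (mem_gradedPart_univ x) ha,
    mul_mem_of_mem_gradedPart (fun j hj i _ a ha x hx => (h i j hj x hx a ha).2)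
      ha (mem_gradedPart_univ x)⟩

end GradedPart

section RegularSequence

variable [SetLike.GradedMul 𝒜]

theorem mul_mem_gradedPart_nonneg {x a : A} (hx : x ∈ gradedPart 𝒜 {i | 0 ≤ i})
    (ha : a ∈ gradedPart 𝒜 {i | 0 ≤ i}) : x * a ∈ gradedPart 𝒜 {i | 0 ≤ i} :=
  mul_mem_of_mem_gradedPart (fun _ hi _ hj _ hx _ ha =>
    mem_gradedPart_of_mem (SetLike.mul_mem_graded hx ha) (add_nonneg hi hj)) hx ha

variable {r rt : A}

theorem eq_zero_of_pow_mul_eq_zero (hr : r ∈ gradedPart 𝒜 {i | 0 ≤ i})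
    (hreg1 : ∀ a ∈ gradedPart 𝒜 {i | 0 ≤ i}, r * a = 0 → a = 0) (k : ℕ) {a : A}
    (ha : a ∈ gradedPart 𝒜 {i | 0 ≤ i}) (h : r ^ k * a = 0) : a = 0 := by
  induction k generalizing a with
  | zero => simpa using h
  | succ k ih =>
    rw [pow_succ, mul_assoc] at h
    exact hreg1 a ha (ih (mul_mem_gradedPart_nonneg hr ha) h)

theorem exists_eq_mul_of_pow_mul_eq_mul (hrt : rt ∈ gradedPart 𝒜 {i | 0 ≤ i})
    (hreg2 : ∀ a ∈ gradedPart 𝒜 {i | 0 ≤ i},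
      (∃ b ∈ gradedPart 𝒜 {i | 0 ≤ i}, rt * a = r * b) →
      ∃ c ∈ gradedPart 𝒜 {i | 0 ≤ i}, a = r * c) (l : ℕ) {a : A}
    (ha : a ∈ gradedPart 𝒜 {i | 0 ≤ i}) (h : ∃ b ∈ gradedPart 𝒜 {i | 0 ≤ i}, rt ^ l * a = r * b) :
    ∃ c ∈ gradedPart 𝒜 {i | 0 ≤ i}, a = r * c := by
  induction l generalizing a with
  | zero => simpa using h
  | succ l ih =>
    simp only [pow_succ, mul_assoc] at h
    exact hreg2 a ha (ih (mul_mem_gradedPart_nonneg hrt ha) h)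

end RegularSequence

section NegativeDegree

variable {r rt : A}

theorem mul_eq_zero_of_neg_of_add_nonneg [GradedRing 𝒜] {d dt m : ℤ} (hdt : 0 < dt)
    (hr : r ∈ 𝒜 d) (hrt : rt ∈ 𝒜 dt) (hcomm : Commute rt r)
    (hreg2 : ∀ a ∈ gradedPart 𝒜 {i | 0 ≤ i},
      (∃ b ∈ gradedPart 𝒜 {i | 0 ≤ i}, rt * a = r * b) →
      ∃ c ∈ gradedPart 𝒜 {i | 0 ≤ i}, a = r * c)
    {v : A} (hv : v ∈ 𝒜 m) (hm : m < 0) (hdm : 0 ≤ d + m) : r * v = 0 := by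
  have hrv : r * v ∈ 𝒜 (d + m) := SetLike.mul_mem_graded hr hv
  have hlift : rt ^ m.natAbs * v ∈ gradedPart 𝒜 {i | 0 ≤ i} := by
    refine mem_gradedPart_of_mem (SetLike.mul_mem_graded (SetLike.pow_mem_graded _ hrt) hv) ?_
    have : (m.natAbs : ℤ) = -m := by omega
    simp only [Set.mem_ofPred_eq, nsmul_eq_mul, this]
    nlinarith
  have hcomm_pow : rt ^ m.natAbs * (r * v) = r * (rt ^ m.natAbs * v) := by
    rw [← mul_assoc, (hcomm.pow_left _).eq, mul_assoc]
  obtain ⟨c, hc, hrc⟩ := exists_eq_mul_of_pow_mul_eq_mul (mem_gradedPart_of_mem hrt hdt.le) hreg2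
    m.natAbs (mem_gradedPart_of_mem hrv hdm) ⟨_, hlift, hcomm_pow⟩
  calc r * v = (DirectSum.decompose 𝒜 (r * v) (d + m) : A) :=
        (DirectSum.decompose_of_mem_same 𝒜 hrv).symm
    _ = r * (DirectSum.decompose 𝒜 c m : A) := by
        rw [hrc, DirectSum.coe_decompose_mul_add_of_left_mem 𝒜 hr]
    _ = 0 := by rw [decompose_eq_zero_of_mem_gradedPart hc (by simpa using hm), mul_zero]

theorem exists_pow_mul_eq_zero_of_neg [SetLike.GradedMul 𝒜] {d : ℤ} (hd : 0 < d) (hr : r ∈ 𝒜 d)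
    (hkill : ∀ m < 0, 0 ≤ d + m → ∀ v ∈ 𝒜 m, r * v = 0) {j : ℤ} {b : A} (hb : b ∈ 𝒜 j)
    (hj : j < 0) : ∃ k : ℕ, r ^ k * b = 0 := by
  by_cases hdj : 0 ≤ d + j
  · exact ⟨1, by simpa using hkill j hj hdj b hb⟩
  · obtain ⟨k, hk⟩ := exists_pow_mul_eq_zero_of_neg hd hr hkill (SetLike.mul_mem_graded hr hb)
      (by omega)
    exact ⟨k + 1, by rw [pow_succ, mul_assoc, hk]⟩
termination_by j.natAbs
decreasing_by omega

end NegativeDegree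

section Annihilation

def NegativePartAnnihilates (𝒜 : ℤ → AddSubgroup A) : Prop :=
  ∀ ⦃i j : ℤ⦄, j < 0 → 0 ≤ i + j → ∀ ⦃b x : A⦄, b ∈ 𝒜 j → x ∈ 𝒜 i → b * x = 0 ∧ x * b = 0

theorem negativePartAnnihilates_of_regular [GradedRing 𝒜] {r rt : A} {d dt : ℤ}
    (hd : 0 < d) (hdt : 0 < dt) (hr : r ∈ 𝒜 d) (hrt : rt ∈ 𝒜 dt)
    (hcr : ∀ x : A, r * x = x * r) (hcrt : ∀ x : A, rt * x = x * rt)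
    (hreg1 : ∀ a ∈ gradedPart 𝒜 {i | 0 ≤ i}, r * a = 0 → a = 0)
    (hreg2 : ∀ a ∈ gradedPart 𝒜 {i | 0 ≤ i},
      (∃ b ∈ gradedPart 𝒜 {i | 0 ≤ i}, rt * a = r * b) →
      ∃ c ∈ gradedPart 𝒜 {i | 0 ≤ i}, a = r * c) :
    NegativePartAnnihilates 𝒜 := by
  intro i j hj hij b x hb hx
  obtain ⟨k, hk⟩ := exists_pow_mul_eq_zero_of_neg hd hr
    (fun _ hm hdm _ hv => mul_eq_zero_of_neg_of_add_nonneg hdt hr hrt (hcrt r) hreg2 hv hm hdm)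
    hb hj
  have hr_pow : ∀ y ∈ gradedPart 𝒜 {i | 0 ≤ i}, r ^ k * y = 0 → y = 0 :=
    fun _ => eq_zero_of_pow_mul_eq_zero (mem_gradedPart_of_mem hr hd.le) hreg1 k
  constructor
  · refine hr_pow _ (mem_gradedPart_of_mem (SetLike.mul_mem_graded hb hx) (by grind)) ?_
    rw [← mul_assoc, hk, zero_mul]
  · refine hr_pow _ (mem_gradedPart_of_mem (SetLike.mul_mem_graded hx hb) hij) ?_
    rw [← mul_assoc, (Commute.pow_left (hcr x) k).eq, mul_assoc, hk, mul_zero]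

theorem NegativePartAnnihilates.mul_mem_gradedPart_neg [SetLike.GradedMul 𝒜]
    (hV : NegativePartAnnihilates 𝒜) {i j : ℤ} (hj : j < 0) {x b : A} (hx : x ∈ 𝒜 i)
    (hb : b ∈ 𝒜 j) : x * b ∈ gradedPart 𝒜 {i | i < 0} ∧ b * x ∈ gradedPart 𝒜 {i | i < 0} := by
  by_cases hij : i + j < 0
  · exact ⟨mem_gradedPart_of_mem (SetLike.mul_mem_graded hx hb) hij,
      mem_gradedPart_of_mem (SetLike.mul_mem_graded hb hx) (by grind)⟩
  · obtain ⟨hbx, hxb⟩ := hV hj (by omega) hb hx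
    exact ⟨hxb ▸ zero_mem _, hbx ▸ zero_mem _⟩

end Annihilation

namespace NondegProducts

variable {n : ℤ}

theorem eq_zero_of_forall_mul_eq_zero (hnd : NondegProducts 𝒜 n) {i : ℤ} {a : A} (ha : a ∈ 𝒜 i)
    (h : ∀ c ∈ 𝒜 (n - i), a * c = 0) : a = 0 := by
  by_contra ha0
  obtain ⟨⟨c, hc, hac⟩, -⟩ := hnd i a ha ha0
  exact hac (h c hc)

theorem eq_zero_of_forall_mul_eq_zero' (hnd : NondegProducts 𝒜 n) {i : ℤ} {a : A} (ha : a ∈ 𝒜 i)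
    (h : ∀ c ∈ 𝒜 (n - i), c * a = 0) : a = 0 := by
  by_contra ha0
  obtain ⟨-, c, hc, hca⟩ := hnd i a ha ha0
  exact hca (h c hc)

variable [SetLike.GradedMul 𝒜]

theorem lt_zero_of_regular [SetLike.GradedOne 𝒜] [Nontrivial A] (hnd : NondegProducts 𝒜 n)
    (hV : NegativePartAnnihilates 𝒜) {r : A} {d : ℤ} (hd : 0 < d) (hr : r ∈ 𝒜 d)
    (hreg1 : ∀ a ∈ gradedPart 𝒜 {i | 0 ≤ i}, r * a = 0 → a = 0) : n < 0 := by
  by_contra! hn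
  obtain ⟨⟨b, hb, hb0⟩, -⟩ := hnd 0 1 SetLike.GradedOne.one_mem one_ne_zero
  rw [sub_zero] at hb
  rw [one_mul] at hb0
  have hrb : r * b ≠ 0 := fun h => hb0 (hreg1 b (mem_gradedPart_of_mem hb hn) h)
  refine hrb (hnd.eq_zero_of_forall_mul_eq_zero' (SetLike.mul_mem_graded hr hb) fun c hc => ?_)
  rw [← mul_assoc, (hV (by omega) (by omega) hc hr).1, zero_mul]

theorem mul_eq_zero_of_le_of_lt (hnd : NondegProducts 𝒜 n) (hV : NegativePartAnnihilates 𝒜)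
    {i j : ℤ} (hj : j ≤ n) (hij : n < i + j) {a x : A} (ha : a ∈ 𝒜 j) (hx : x ∈ 𝒜 i) :
    x * a = 0 ∧ a * x = 0 := by
  constructor
  · refine hnd.eq_zero_of_forall_mul_eq_zero' (SetLike.mul_mem_graded hx ha) fun c hc => ?_
    rw [← mul_assoc, (hV (by omega) (by omega) hc hx).1, zero_mul]
  · refine hnd.eq_zero_of_forall_mul_eq_zero (SetLike.mul_mem_graded ha hx) fun c hc => ?_
    rw [mul_assoc, (hV (by omega) (by omega) hc hx).2, mul_zero]

theorem mul_eq_zero_of_le_of_neg (hnd : NondegProducts 𝒜 n) (hV : NegativePartAnnihilates 𝒜)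
    {i j : ℤ} (hi : i ≤ n) (hj : j < 0) {a b : A} (ha : a ∈ 𝒜 i) (hb : b ∈ 𝒜 j) :
    a * b = 0 ∧ b * a = 0 := by
  constructor
  · refine hnd.eq_zero_of_forall_mul_eq_zero (SetLike.mul_mem_graded ha hb) fun c hc => ?_
    rw [mul_assoc, (hV hj (by omega) hb hc).1, mul_zero]
  · refine hnd.eq_zero_of_forall_mul_eq_zero' (SetLike.mul_mem_graded hb ha) fun c hc => ?_
    rw [← mul_assoc, (hV hj (by omega) hb hc).2, zero_mul]

theorem mul_mem_gradedPart_le (hnd : NondegProducts 𝒜 n) (hV : NegativePartAnnihilates 𝒜)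
    {i j : ℤ} (hj : j ≤ n) {x a : A} (hx : x ∈ 𝒜 i) (ha : a ∈ 𝒜 j) :
    x * a ∈ gradedPart 𝒜 {i | i ≤ n} ∧ a * x ∈ gradedPart 𝒜 {i | i ≤ n} := by
  by_cases hij : i + j ≤ n
  · exact ⟨mem_gradedPart_of_mem (SetLike.mul_mem_graded hx ha) hij,
      mem_gradedPart_of_mem (SetLike.mul_mem_graded ha hx) (by grind)⟩
  · obtain ⟨hxa, hax⟩ := hnd.mul_eq_zero_of_le_of_lt hV hj (by omega) ha hx
    exact ⟨hxa ▸ zero_mem _, hax ▸ zero_mem _⟩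

end NondegProducts

/-- If `A ≠ 0` is a `ℤ`-graded ring with non-degenerate products in
degree `n`, and `A^{≥0}` admits a regular sequence `(r, r̃)` of central homogeneous
elements of positive degree, then `n < 0` and `A^{≤ n} ⊆ A^{< 0}` are two-sided ideals of
`A` annihilating each other. -/
theorem neg_degree_and_annihilating_ideals {A : Type} [Ring A] [Nontrivial A]
    (𝒜 : ℤ → AddSubgroup A) [GradedRing 𝒜] (n : ℤ)
    (hnd : NondegProducts 𝒜 n)
    (r rt : A) (d dt : ℤ) (hd : 0 < d) (hdt : 0 < dt)
    (hr : r ∈ 𝒜 d) (hrt : rt ∈ 𝒜 dt)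
    (hcr : ∀ x : A, r * x = x * r) (hcrt : ∀ x : A, rt * x = x * rt)
    (hreg1 : ∀ a ∈ gradedPart 𝒜 {i | 0 ≤ i}, r * a = 0 → a = 0)
    (hreg2 : ∀ a ∈ gradedPart 𝒜 {i | 0 ≤ i},
      (∃ b ∈ gradedPart 𝒜 {i | 0 ≤ i}, rt * a = r * b) →
      ∃ c ∈ gradedPart 𝒜 {i | 0 ≤ i}, a = r * c) :
    n < 0 ∧
    -- `A^{≤ n} ⊆ A^{< 0}`
    (∀ a ∈ gradedPart 𝒜 {i | i ≤ n}, a ∈ gradedPart 𝒜 {i | i < 0}) ∧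
    -- both are two-sided ideals of `A`
    (∀ x : A, ∀ a ∈ gradedPart 𝒜 {i | i ≤ n},
      x * a ∈ gradedPart 𝒜 {i | i ≤ n} ∧ a * x ∈ gradedPart 𝒜 {i | i ≤ n}) ∧
    (∀ x : A, ∀ b ∈ gradedPart 𝒜 {i | i < 0},
      x * b ∈ gradedPart 𝒜 {i | i < 0} ∧ b * x ∈ gradedPart 𝒜 {i | i < 0}) ∧
    -- they annihilate each other
    (∀ a ∈ gradedPart 𝒜 {i | i ≤ n}, ∀ b ∈ gradedPart 𝒜 {i | i < 0},
      a * b = 0 ∧ b * a = 0) := by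
  have hV := negativePartAnnihilates_of_regular hd hdt hr hrt hcr hcrt hreg1 hreg2
  have hn := hnd.lt_zero_of_regular hV hd hr hreg1
  refine ⟨hn, fun a ha => gradedPart_mono (fun i (hi : i ≤ n) => hi.trans_lt hn) ha,
    gradedPart_isTwoSided_of_homogeneous fun _ _ hj _ hx _ ha =>
      hnd.mul_mem_gradedPart_le hV hj hx ha,
    gradedPart_isTwoSided_of_homogeneous fun _ _ hj _ hx _ hb =>
      hV.mul_mem_gradedPart_neg hj hx hb,
    fun a ha b hb => ⟨?_, ?_⟩⟩
  · exact mul_eq_zero_of_mem_gradedPart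
      (fun _ hi _ hj _ ha _ hb => (hnd.mul_eq_zero_of_le_of_neg hV hi hj ha hb).1) ha hb
  · exact mul_eq_zero_of_mem_gradedPart
      (fun _ hj _ hi _ hb _ ha => (hnd.mul_eq_zero_of_le_of_neg hV hi hj ha hb).2) hb ha
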